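/- For each r ≥ 1, the graph G_r on vertices v_0, ..., v_{3r} (indices mod 3r+1), where v_i is adjacent to v_{i−1}, v_{i+1}, and v_{i+3j+2} for all j ∈ {0,...,r−1}, is 4-vertex-critical: it is not 3-colorable, but G_r − v is 3-colorable for every vertex v. -/

import Mathlib

/-- Pokrovskiy's graph `G_r` on vertices `ZMod (3r+1)`: `x` and `y` are adjacent
iff they differ by `±1` or by `±(3j+2)` for some `0 ≤ j < r`. -/
def pok (r : ℕ) : SimpleGraph (ZMod (3 * r + 1)) where
  Adj x y := x ≠ y ∧ (y - x = 1 ∨ x - y = 1 ∨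
    (∃ j < r, y - x = ((3 * j + 2 : ℕ) : ZMod (3 * r + 1))) ∨
    (∃ j < r, x - y = ((3 * j + 2 : ℕ) : ZMod (3 * r + 1))))
  symm := ⟨by
    rintro x y ⟨h1, h2⟩
    refine ⟨h1.symm, ?_⟩
    rcases h2 with h | h | h | h
    · exact Or.inr (Or.inl h)
    · exact Or.inl h
    · exact Or.inr (Or.inr (Or.inr h))
    · exact Or.inr (Or.inr (Or.inl h))⟩
  loopless := ⟨fun x h => h.1 rfl⟩

/-! Since `x ~ x + 1` and `x ~ x + 2`, any three consecutive vertices span a triangle, so a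
3-colouring `c` satisfies `c (x + 3) = c x`. As `(2r + 1) * 3 = 1` in `ZMod (3r+1)`, `c` is then
constant, contradicting the edge `0 ~ 1`. After deleting `v`, colour `x` by the residue mod 3 of
the representative of `x - v` in `{1, …, 3r}`. -/

namespace SimpleGraph

variable {α : Type*} {G : SimpleGraph α}

theorem Coloring.periodic_three_of_adj_add_one_of_adj_add_two [AddMonoidWithOne α]
    (h₁ : ∀ x, G.Adj x (x + 1)) (h₂ : ∀ x, G.Adj x (x + 2)) (C : G.Coloring (Fin 3)) :
    Function.Periodic C 3 := by
  intro x
  have fin_three : ∀ a b c d : Fin 3, a ≠ b ∧ a ≠ c ∧ b ≠ c ∧ d ≠ b ∧ d ≠ c → d = a := by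
    decide
  have e₁₁ : x + 1 + 1 = x + 2 := by rw [add_assoc, one_add_one_eq_two]
  have e₁₂ : x + 1 + 2 = x + 3 := by rw [add_assoc]; norm_num
  have e₂₁ : x + 2 + 1 = x + 3 := by rw [add_assoc]; norm_num
  refine fin_three _ _ _ _ ⟨C.valid (h₁ x), C.valid (h₂ x), ?_, ?_, ?_⟩
  · simpa only [e₁₁] using C.valid (h₁ (x + 1))
  · simpa only [e₁₂] using (C.valid (h₂ (x + 1))).symm
  · simpa only [e₂₁] using (C.valid (h₁ (x + 2))).symm

theorem not_colorable_three_of_adj_add_one_of_adj_add_two [Ring α]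
    (h₁ : ∀ x, G.Adj x (x + 1)) (h₂ : ∀ x, G.Adj x (x + 2)) {n : ℕ} (hn : (n : α) * 3 = 1) :
    ¬ G.Colorable 3 := by
  rintro ⟨C⟩
  have h := (C.periodic_three_of_adj_add_one_of_adj_add_two h₁ h₂).nat_mul n 0
  rw [hn, zero_add] at h
  exact C.valid (h₁ 0) (by rw [zero_add, h])

end SimpleGraph

open SimpleGraph

def IsPokStep (r d : ℕ) : Prop := d = 1 ∨ ∃ j < r, d = 3 * j + 2

theorem pok_adj_iff {r : ℕ} {x y : ZMod (3 * r + 1)} :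
    (pok r).Adj x y ↔ x ≠ y ∧ ∃ d, IsPokStep r d ∧ (y - x = d ∨ x - y = d) := by
  simp only [pok, IsPokStep]
  constructor
  · rintro ⟨hne, h | h | ⟨j, hj, h⟩ | ⟨j, hj, h⟩⟩
    · exact ⟨hne, 1, Or.inl rfl, Or.inl (by simpa using h)⟩
    · exact ⟨hne, 1, Or.inl rfl, Or.inr (by simpa using h)⟩
    · exact ⟨hne, _, Or.inr ⟨j, hj, rfl⟩, Or.inl h⟩
    · exact ⟨hne, _, Or.inr ⟨j, hj, rfl⟩, Or.inr h⟩
  · rintro ⟨hne, d, rfl | ⟨j, hj, rfl⟩, h | h⟩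
    · exact ⟨hne, Or.inl (by simpa using h)⟩
    · exact ⟨hne, Or.inr (Or.inl (by simpa using h))⟩
    · exact ⟨hne, Or.inr (Or.inr (Or.inl ⟨j, hj, h⟩))⟩
    · exact ⟨hne, Or.inr (Or.inr (Or.inr ⟨j, hj, h⟩))⟩

theorem pok_adj_add_natCast {r d : ℕ} (hr : 1 ≤ r) (hd : IsPokStep r d) (x : ZMod (3 * r + 1)) :
    (pok r).Adj x (x + d) := by
  have hd₀ : (d : ZMod (3 * r + 1)) ≠ 0 := by
    rw [Ne, ZMod.natCast_eq_zero_iff]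
    intro hdvd
    rcases hd with rfl | ⟨j, hj, rfl⟩ <;> have := Nat.le_of_dvd (by omega) hdvd <;> omega
  exact pok_adj_iff.2 ⟨left_ne_add.2 hd₀, d, hd, Or.inl (add_sub_cancel_left x _)⟩

theorem pok_not_colorable_three {r : ℕ} (hr : 1 ≤ r) : ¬ (pok r).Colorable 3 := by
  have h₁ : IsPokStep r 1 := Or.inl rfl
  have h₂ : IsPokStep r 2 := Or.inr ⟨0, hr, rfl⟩
  refine not_colorable_three_of_adj_add_one_of_adj_add_two (n := 2 * r + 1)
    (by simpa using pok_adj_add_natCast hr h₁) (by simpa using pok_adj_add_natCast hr h₂) ?_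
  have hz := ZMod.natCast_self (3 * r + 1)
  push_cast at hz ⊢
  linear_combination 2 * hz

/-- Adding a step to a nonzero residue changes its representative in `{1, …, 3r}` by `d`, or,
on wrap-around, by `d - (3r+1) ≡ d - 1 (mod 3)`; wrap-around with `d = 1` would leave `0`. -/
theorem val_mod_three_ne_of_sub_eq {r d : ℕ} {a b : ZMod (3 * r + 1)} (ha : a ≠ 0) (hb : b ≠ 0)
    (hd : IsPokStep r d) (h : b - a = d) : a.val % 3 ≠ b.val % 3 := by
  have ha₀ := (ZMod.val_ne_zero a).2 ha
  have hb₀ := (ZMod.val_ne_zero b).2 hb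
  have ha_lt := a.val_lt
  have hd_lt : d < 3 * r + 1 := by rcases hd with rfl | ⟨j, hj, rfl⟩ <;> omega
  have hdv : (d : ZMod (3 * r + 1)).val = d := ZMod.val_natCast_of_lt hd_lt
  rw [sub_eq_iff_eq_add'] at h
  have hbv : b.val = a.val + d ∨ b.val = a.val + d - (3 * r + 1) := by
    rcases Nat.lt_or_ge (a.val + d) (3 * r + 1) with hlt | hge
    · exact Or.inl (by rw [h, ZMod.val_add_of_lt (by rwa [hdv]), hdv])
    · exact Or.inr (by rw [h, ZMod.val_add_of_le (by rwa [hdv]), hdv])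
  clear h hdv
  rcases hd with rfl | ⟨j, hj, rfl⟩ <;> omega

theorem pok_induce_compl_singleton_colorable (r : ℕ) (v : ZMod (3 * r + 1)) :
    ((pok r).induce ({v}ᶜ : Set (ZMod (3 * r + 1)))).Colorable 3 := by
  refine ⟨Coloring.mk (fun x => ⟨(x.1 - v).val % 3, Nat.mod_lt _ three_pos⟩) ?_⟩
  rintro ⟨x, hx⟩ ⟨y, hy⟩ hadj hcol
  have hxv : x - v ≠ 0 := sub_ne_zero.2 hx
  have hyv : y - v ≠ 0 := sub_ne_zero.2 hy
  obtain ⟨-, d, hd, h | h⟩ := pok_adj_iff.1 hadj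
  · exact val_mod_three_ne_of_sub_eq hxv hyv hd (by rwa [sub_sub_sub_cancel_right])
      (congrArg Fin.val hcol)
  · exact val_mod_three_ne_of_sub_eq hyv hxv hd (by rwa [sub_sub_sub_cancel_right])
      (congrArg Fin.val hcol).symm


/-- For `r ≥ 1`, the graph `G_r` is 4-vertex-critical: it is not 3-colorable,
but deleting any vertex yields a 3-colorable graph. -/
theorem pok_four_vertex_critical (r : ℕ) (hr : 1 ≤ r) :
    ¬ (pok r).Colorable 3 ∧
    ∀ v : ZMod (3 * r + 1),
      ((pok r).induce ({v}ᶜ : Set (ZMod (3 * r + 1)))).Colorable 3 := by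
  exact ⟨pok_not_colorable_three hr, pok_induce_compl_singleton_colorable r⟩
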